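/- arXiv:1303.2937 — 4 statements merged into one kernel-verified Lean document; each statement's English description precedes it below -/
import Mathlib

section
/- Let R be a commutative Noetherian ring. The assignment sending the class [M] of a finitely generated R-module to the class [Ω_R M] of a syzygy of M induces a well-defined ℤ[t^{±1}]-linear endomorphism Ω : J(R) → J(R). -/
open LaurentPolynomial Finsupp

universe u

variable (R : Type u) [CommRing R]

/-- Finitely generated modules over `R` (in universe `u`), bundled. -/
def FGMod (R : Type u) [CommRing R] : Type (u + 1) :=
  {M : ModuleCat.{u} R // Module.Finite R M}

/-- The direct sum of two finitely generated modules. -/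
noncomputable def FGMod.sum (M N : FGMod R) : FGMod R :=
  ⟨ModuleCat.of R (↥M.1 × ↥N.1),
    by haveI := M.2; haveI := N.2; exact inferInstanceAs (Module.Finite R (↥M.1 × ↥N.1))⟩

/-- Relations (R1): `[M] - [M']` for every exact sequence `0 → P → M → M' → 0` of
finitely generated modules with `P` projective. -/
def jRel1 : Set (FGMod R →₀ ℤ[T;T⁻¹]) :=
  {x | ∃ (P M M' : FGMod R) (f : ↥P.1 →ₗ[R] ↥M.1) (g : ↥M.1 →ₗ[R] ↥M'.1),
    Module.Projective R ↥P.1 ∧ Function.Injective f ∧ Function.Surjective g ∧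
      Function.Exact f g ∧ x = single M 1 - single M' 1}

/-- Relations (R2): `[M] - t • [M']` for every exact sequence `0 → M' → P → M → 0` of
finitely generated modules with `P` projective. -/
def jRel2 : Set (FGMod R →₀ ℤ[T;T⁻¹]) :=
  {x | ∃ (M' P M : FGMod R) (f : ↥M'.1 →ₗ[R] ↥P.1) (g : ↥P.1 →ₗ[R] ↥M.1),
    Module.Projective R ↥P.1 ∧ Function.Injective f ∧ Function.Surjective g ∧
      Function.Exact f g ∧ x = single M 1 - (T 1 : ℤ[T;T⁻¹]) • single M' (1 : ℤ[T;T⁻¹])}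

/-- Relations (R3): `[M ⊕ M'] - [M] - [M']` for all finitely generated modules `M`, `M'`. -/
def jRel3 : Set (FGMod R →₀ ℤ[T;T⁻¹]) :=
  {x | ∃ M M' : FGMod R, x = single (FGMod.sum R M M') 1 - single M 1 - single M' 1}

/-- The Grothendieck module `J(R)`: the free `ℤ[t^{±1}]`-module on the finitely
generated `R`-modules modulo the relations (R1), (R2), (R3).  (The relation (R1)
applied to exact sequences `0 → 0 → M → M' → 0` identifies the classes of isomorphic
modules, so this coincides with the free module on the set of isomorphism classes
modulo the same relations.) -/
abbrev JMod (R : Type u) [CommRing R] : Type (u + 1) :=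
  (FGMod R →₀ ℤ[T;T⁻¹]) ⧸ Submodule.span (ℤ[T;T⁻¹]) (jRel1 R ∪ jRel2 R ∪ jRel3 R)

/-- The class `[M]` of a finitely generated module `M` in `J(R)`. -/
noncomputable def JMod.cls (M : FGMod R) : JMod R :=
  Submodule.Quotient.mk (single M 1)

/-- A (general) syzygy: `K` is a syzygy of `M` if `K` is isomorphic to the kernel of a
surjection `P ↠ M` with `P` a finitely generated projective module. -/
def IsSyzygyOf (K M : FGMod R) : Prop :=
  ∃ P : FGMod R, Module.Projective R ↥P.1 ∧
    ∃ φ : ↥P.1 →ₗ[R] ↥M.1, Function.Surjective φ ∧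
      Nonempty (↥K.1 ≃ₗ[R] LinearMap.ker φ)

namespace JProof

variable {R}

/-- Bundle a finitely generated module as an `FGMod`. -/
noncomputable def ofMod (M : Type u) [AddCommGroup M] [Module R M] (h : Module.Finite R M) :
    FGMod R := ⟨ModuleCat.of R M, h⟩

lemma mk_eq_zero_of_mem {x : FGMod R →₀ ℤ[T;T⁻¹]}
    (hx : x ∈ jRel1 R ∪ jRel2 R ∪ jRel3 R) :
    (Submodule.Quotient.mk x : JMod R) = 0 :=
  (Submodule.Quotient.mk_eq_zero _).2 (Submodule.subset_span hx)

lemma cls_eq_of_rel1 {P M M' : FGMod R} (f : ↥P.1 →ₗ[R] ↥M.1) (g : ↥M.1 →ₗ[R] ↥M'.1)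
    (hP : Module.Projective R ↥P.1) (hf : Function.Injective f) (hg : Function.Surjective g)
    (hfg : Function.Exact f g) : JMod.cls R M = JMod.cls R M' := by
  have h : (Submodule.Quotient.mk (single M 1 - single M' 1) : JMod R) = 0 :=
    mk_eq_zero_of_mem (Or.inl (Or.inl ⟨P, M, M', f, g, hP, hf, hg, hfg, rfl⟩))
  rw [Submodule.Quotient.mk_sub, sub_eq_zero] at h
  exact h

lemma cls_sum (M N : FGMod R) :
    JMod.cls R (FGMod.sum R M N) = JMod.cls R M + JMod.cls R N := by
  have h : (Submodule.Quotient.mk (single (FGMod.sum R M N) 1 - single M 1 - single N 1) :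
      JMod R) = 0 := mk_eq_zero_of_mem (Or.inr ⟨M, N, rfl⟩)
  rw [Submodule.Quotient.mk_sub, Submodule.Quotient.mk_sub, sub_sub, sub_eq_zero] at h
  exact h

/-- The zero module, as an `FGMod`. -/
noncomputable def pzero : FGMod R := ofMod PUnit inferInstance

instance : Subsingleton ↥((pzero : FGMod R)).1 := inferInstanceAs (Subsingleton PUnit)

lemma cls_eq_of_iso {M N : FGMod R} (e : ↥M.1 ≃ₗ[R] ↥N.1) : JMod.cls R M = JMod.cls R N := by
  refine cls_eq_of_rel1 (P := pzero) 0 e.toLinearMap inferInstance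
    (fun a b _ => Subsingleton.elim a b) e.surjective ?_
  intro y
  constructor
  · intro hy
    refine ⟨PUnit.unit, ?_⟩
    have : y = 0 := by
      have := e.map_eq_zero_iff.mp hy
      exact this
    simp [this]
    rfl
  · rintro ⟨u, rfl⟩
    simp

lemma cls_pzero : JMod.cls R (pzero : FGMod R) = 0 := by
  have h := cls_sum (R := R) pzero pzero
  have e : ↥((FGMod.sum R pzero pzero)).1 ≃ₗ[R] ↥((pzero : FGMod R)).1 := by
    haveI : Subsingleton ↥((FGMod.sum R pzero pzero)).1 :=
      inferInstanceAs (Subsingleton (↥((pzero : FGMod R)).1 × ↥((pzero : FGMod R)).1))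
    exact LinearEquiv.ofBijective 0
      ⟨fun a b _ => Subsingleton.elim a b, fun y => ⟨0, Subsingleton.elim _ _⟩⟩
  rw [cls_eq_of_iso e] at h
  exact (left_eq_add.mp h)

lemma cls_eq_zero_of_projective {P : FGMod R} (hP : Module.Projective R ↥P.1) :
    JMod.cls R P = 0 := by
  have h : JMod.cls R P = JMod.cls R (pzero : FGMod R) := by
    refine cls_eq_of_rel1 (P := P) LinearMap.id 0 hP (fun a b h => h)
      (fun y => ⟨0, Subsingleton.elim _ _⟩) ?_
    intro y
    simp [Subsingleton.elim ((0 : ↥P.1 →ₗ[R] ↥((pzero : FGMod R)).1) y) 0]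
  rw [h, cls_pzero]

section Split

variable {X P : Type u} [AddCommGroup X] [AddCommGroup P] [Module R X] [Module R P]

/-- If `π : X → P` has a section `s`, then `X ≅ ker π × P`. -/
noncomputable def splitEquiv (π : X →ₗ[R] P) (s : P →ₗ[R] X) (hs : ∀ p, π (s p) = p) :
    (LinearMap.ker π × P) ≃ₗ[R] X := by
  refine LinearEquiv.ofBijective ((LinearMap.ker π).subtype.coprod s) ⟨?_, ?_⟩
  · rintro ⟨k, p⟩ ⟨k', p'⟩ h
    simp only [LinearMap.coprod_apply, Submodule.coe_subtype] at h
    have hp : p = p' := by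
      have h2 := congrArg π h
      simpa [hs, LinearMap.mem_ker.mp k.2, LinearMap.mem_ker.mp k'.2] using h2
    subst hp
    have hk : (k : X) = k' := by
      have := add_right_cancel h
      exact this
    exact Prod.ext (Subtype.ext hk) rfl
  · intro x
    exact ⟨(⟨x - s (π x), by simp [LinearMap.mem_ker, hs]⟩, π x), by simp⟩

end Split

lemma cls_syzygy_unique [IsNoetherianRing R] {K K' M : FGMod R}
    (h : IsSyzygyOf R K M) (h' : IsSyzygyOf R K' M) : JMod.cls R K = JMod.cls R K' := by
  obtain ⟨P, hP, φ, hφ, ⟨e⟩⟩ := h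
  obtain ⟨P', hP', φ', hφ', ⟨e'⟩⟩ := h'
  haveI := M.2; haveI := P.2; haveI := P'.2; haveI := hP; haveI := hP'
  set ψ : (↥P.1 × ↥P'.1) →ₗ[R] ↥M.1 :=
    φ ∘ₗ LinearMap.fst R ↥P.1 ↥P'.1 - φ' ∘ₗ LinearMap.snd R ↥P.1 ↥P'.1 with hψ
  set X : Submodule R (↥P.1 × ↥P'.1) := LinearMap.ker ψ with hX
  have memX : ∀ z : ↥P.1 × ↥P'.1, z ∈ X ↔ φ z.1 = φ' z.2 := by
    intro z
    simp [hX, hψ, LinearMap.mem_ker, sub_eq_zero]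
  set π₁ : ↥X →ₗ[R] ↥P.1 := (LinearMap.fst R ↥P.1 ↥P'.1) ∘ₗ X.subtype with hπ₁
  set π₂ : ↥X →ₗ[R] ↥P'.1 := (LinearMap.snd R ↥P.1 ↥P'.1) ∘ₗ X.subtype with hπ₂
  have hπ₁s : Function.Surjective π₁ := by
    intro p
    obtain ⟨p', hp'⟩ := hφ' (φ p)
    exact ⟨⟨(p, p'), (memX _).2 hp'.symm⟩, rfl⟩
  have hπ₂s : Function.Surjective π₂ := by
    intro p'
    obtain ⟨p, hp⟩ := hφ (φ' p')
    exact ⟨⟨(p, p'), (memX _).2 hp⟩, rfl⟩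
  -- ker π₁ ≃ ker φ'
  have c₁mem : ∀ x : ↥(LinearMap.ker π₁), (π₂ x.1) ∈ LinearMap.ker φ' := by
    rintro ⟨x, hx⟩
    have h1 : φ (x : ↥P.1 × ↥P'.1).1 = φ' (x : ↥P.1 × ↥P'.1).2 := (memX _).1 x.2
    have h0 : (x : ↥P.1 × ↥P'.1).1 = 0 := hx
    rw [LinearMap.mem_ker]
    have : φ' (x : ↥P.1 × ↥P'.1).2 = 0 := by rw [← h1, h0, map_zero]
    exact this
  set c₁ : ↥(LinearMap.ker π₁) →ₗ[R] ↥(LinearMap.ker φ') :=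
    (π₂ ∘ₗ (LinearMap.ker π₁).subtype).codRestrict (LinearMap.ker φ') c₁mem with hc₁
  have hc₁b : Function.Bijective c₁ := by
    constructor
    · rintro ⟨⟨⟨xa, xb⟩, hx⟩, hx1⟩ ⟨⟨⟨ya, yb⟩, hy⟩, hy1⟩ hxy
      have h2 : xb = yb := congrArg Subtype.val hxy
      have hx1' : xa = 0 := hx1
      have hy1' : ya = 0 := hy1
      subst h2; subst hx1'; subst hy1'
      rfl
    · rintro ⟨b, hb⟩
      have hmem : ((0 : ↥P.1), b) ∈ X := (memX _).2 (by simp [LinearMap.mem_ker.mp hb])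
      refine ⟨⟨⟨((0 : ↥P.1), b), hmem⟩, ?_⟩, rfl⟩
      show ((((0 : ↥P.1), b) : ↥P.1 × ↥P'.1)).1 = 0
      rfl
  -- ker π₂ ≃ ker φ
  have c₂mem : ∀ x : ↥(LinearMap.ker π₂), (π₁ x.1) ∈ LinearMap.ker φ := by
    rintro ⟨x, hx⟩
    have h1 : φ (x : ↥P.1 × ↥P'.1).1 = φ' (x : ↥P.1 × ↥P'.1).2 := (memX _).1 x.2
    have h0 : (x : ↥P.1 × ↥P'.1).2 = 0 := hx
    rw [LinearMap.mem_ker]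
    have : φ (x : ↥P.1 × ↥P'.1).1 = 0 := by rw [h1, h0, map_zero]
    exact this
  set c₂ : ↥(LinearMap.ker π₂) →ₗ[R] ↥(LinearMap.ker φ) :=
    (π₁ ∘ₗ (LinearMap.ker π₂).subtype).codRestrict (LinearMap.ker φ) c₂mem with hc₂
  have hc₂b : Function.Bijective c₂ := by
    constructor
    · rintro ⟨⟨⟨xa, xb⟩, hx⟩, hx1⟩ ⟨⟨⟨ya, yb⟩, hy⟩, hy1⟩ hxy
      have h2 : xa = ya := congrArg Subtype.val hxy
      have hx1' : xb = 0 := hx1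
      have hy1' : yb = 0 := hy1
      subst h2; subst hx1'; subst hy1'
      rfl
    · rintro ⟨a, ha⟩
      have hmem : (a, (0 : ↥P'.1)) ∈ X := (memX _).2 (by simp [LinearMap.mem_ker.mp ha])
      refine ⟨⟨⟨(a, (0 : ↥P'.1)), hmem⟩, ?_⟩, rfl⟩
      show (((a, (0 : ↥P'.1)) : ↥P.1 × ↥P'.1)).2 = 0
      rfl
  -- splittings
  obtain ⟨s₁, hs₁⟩ := Module.projective_lifting_property π₁ LinearMap.id hπ₁s
  obtain ⟨s₂, hs₂⟩ := Module.projective_lifting_property π₂ LinearMap.id hπ₂s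
  have hs₁' : ∀ p, π₁ (s₁ p) = p := fun p => congrArg (fun f => f p) (congrArg DFunLike.coe hs₁)
  have hs₂' : ∀ p, π₂ (s₂ p) = p := fun p => congrArg (fun f => f p) (congrArg DFunLike.coe hs₂)
  -- finiteness
  haveI : Module.Finite R ↥X := inferInstance
  haveI : Module.Finite R ↥(LinearMap.ker π₁) := inferInstance
  haveI : Module.Finite R ↥(LinearMap.ker π₂) := inferInstance
  haveI : Module.Finite R ↥(LinearMap.ker φ) := inferInstance
  haveI : Module.Finite R ↥(LinearMap.ker φ') := inferInstance
  -- assemble the classes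
  set Xf : FGMod R := ofMod ↥X inferInstance
  have h1 : JMod.cls R Xf = JMod.cls R (FGMod.sum R (ofMod ↥(LinearMap.ker π₁) inferInstance) P) :=
    cls_eq_of_iso (splitEquiv π₁ s₁ hs₁').symm
  have h2 : JMod.cls R Xf = JMod.cls R (FGMod.sum R (ofMod ↥(LinearMap.ker π₂) inferInstance) P') :=
    cls_eq_of_iso (splitEquiv π₂ s₂ hs₂').symm
  rw [cls_sum, cls_eq_zero_of_projective hP, add_zero] at h1
  rw [cls_sum, cls_eq_zero_of_projective hP', add_zero] at h2
  have h3 : JMod.cls R (ofMod ↥(LinearMap.ker π₁) inferInstance : FGMod R) = JMod.cls R K' :=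
    (cls_eq_of_iso ((LinearEquiv.ofBijective c₁ hc₁b).trans e'.symm))
  have h4 : JMod.cls R (ofMod ↥(LinearMap.ker π₂) inferInstance : FGMod R) = JMod.cls R K :=
    (cls_eq_of_iso ((LinearEquiv.ofBijective c₂ hc₂b).trans e.symm))
  rw [h3] at h1
  rw [h4] at h2
  rw [← h2, ← h1]

lemma cls_eq_T_smul_of_syzygy {K M : FGMod R} (h : IsSyzygyOf R K M) :
    JMod.cls R M = (T 1 : ℤ[T;T⁻¹]) • JMod.cls R K := by
  obtain ⟨P, hP, φ, hφ, ⟨e⟩⟩ := h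
  set f : ↥K.1 →ₗ[R] ↥P.1 := (LinearMap.ker φ).subtype ∘ₗ e.toLinearMap with hf
  have hfi : Function.Injective f := by
    intro a b hab
    exact e.injective (Subtype.ext hab)
  have hex : Function.Exact f φ := by
    intro y
    constructor
    · intro hy
      exact ⟨e.symm ⟨y, LinearMap.mem_ker.mpr hy⟩, by simp [hf]⟩
    · rintro ⟨x, rfl⟩
      exact LinearMap.mem_ker.mp (e x).2
  have hmem : (single M (1 : ℤ[T;T⁻¹]) - (T 1 : ℤ[T;T⁻¹]) • single K (1 : ℤ[T;T⁻¹]) :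
      FGMod R →₀ ℤ[T;T⁻¹]) ∈ jRel2 R := ⟨K, P, M, f, φ, hP, hfi, hφ, hex, rfl⟩
  have h0 := mk_eq_zero_of_mem (Or.inl (Or.inr hmem))
  rw [Submodule.Quotient.mk_sub, Submodule.Quotient.mk_smul, sub_eq_zero] at h0
  exact h0

lemma exists_syzygy [IsNoetherianRing R] (M : FGMod R) : ∃ K, IsSyzygyOf R K M := by
  haveI := M.2
  obtain ⟨n, f, hf⟩ := Module.Finite.exists_fin' R ↥M.1
  exact ⟨ofMod ↥(LinearMap.ker f) inferInstance,
    ofMod (Fin n → R) inferInstance, inferInstanceAs (Module.Projective R (Fin n → R)), f, hf,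
    ⟨LinearEquiv.refl R _⟩⟩

lemma isSyzygyOf_of_rel1 {P M M'' K : FGMod R} (f : ↥P.1 →ₗ[R] ↥M.1) (g : ↥M.1 →ₗ[R] ↥M''.1)
    (hP : Module.Projective R ↥P.1) (hf : Function.Injective f) (hg : Function.Surjective g)
    (hfg : Function.Exact f g) (hK : IsSyzygyOf R K M'') : IsSyzygyOf R K M := by
  obtain ⟨P'', hP'', φ'', hφ'', ⟨e⟩⟩ := hK
  haveI := hP; haveI := hP''
  obtain ⟨h, hh⟩ := Module.projective_lifting_property g φ'' hg
  have hh' : ∀ x, g (h x) = φ'' x := fun x => congrArg (fun f => f x) (congrArg DFunLike.coe hh)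
  set ψ : (↥P.1 × ↥P''.1) →ₗ[R] ↥M.1 :=
    f ∘ₗ LinearMap.fst R ↥P.1 ↥P''.1 + h ∘ₗ LinearMap.snd R ↥P.1 ↥P''.1 with hψ
  have memker : ∀ z : ↥P.1 × ↥P''.1, z ∈ LinearMap.ker ψ ↔ f z.1 + h z.2 = 0 := by
    intro z; simp [hψ, LinearMap.mem_ker]
  have hψs : Function.Surjective ψ := by
    intro m
    obtain ⟨x, hx⟩ := hφ'' (g m)
    have hgm : g (m - h x) = 0 := by rw [map_sub, hh' x, hx, sub_self]
    obtain ⟨p, hp⟩ := (hfg (m - h x)).1 hgm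
    refine ⟨(p, x), ?_⟩
    show f p + h x = m
    rw [hp]; abel
  have cmem : ∀ x : ↥(LinearMap.ker ψ),
      ((LinearMap.snd R ↥P.1 ↥P''.1 ∘ₗ (LinearMap.ker ψ).subtype) x) ∈ LinearMap.ker φ'' := by
    rintro ⟨⟨a, b⟩, hab⟩
    have h1 : f a + h b = 0 := (memker _).1 hab
    have h2 : h b = -f a := eq_neg_of_add_eq_zero_right h1
    rw [LinearMap.mem_ker]
    show φ'' b = 0
    rw [← hh' b, h2, map_neg, hfg.apply_apply_eq_zero, neg_zero]
  set c : ↥(LinearMap.ker ψ) →ₗ[R] ↥(LinearMap.ker φ'') :=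
    (LinearMap.snd R ↥P.1 ↥P''.1 ∘ₗ (LinearMap.ker ψ).subtype).codRestrict
      (LinearMap.ker φ'') cmem with hc
  have hcb : Function.Bijective c := by
    constructor
    · rintro ⟨⟨xa, xb⟩, hx⟩ ⟨⟨ya, yb⟩, hy⟩ hxy
      have h2 : xb = yb := congrArg Subtype.val hxy
      subst h2
      have hx1 : f xa + h xb = 0 := (memker _).1 hx
      have hy1 : f ya + h xb = 0 := (memker _).1 hy
      have : f xa = f ya := by
        have := hx1.trans hy1.symm
        exact add_right_cancel this
      have := hf this
      subst this
      rfl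
    · rintro ⟨b, hb⟩
      have hgb : g (h b) = 0 := by rw [hh' b]; exact LinearMap.mem_ker.mp hb
      obtain ⟨p, hp⟩ := (hfg (h b)).1 hgb
      have hmem : (-p, b) ∈ LinearMap.ker ψ := (memker _).2 (by rw [map_neg, hp]; abel)
      exact ⟨⟨(-p, b), hmem⟩, rfl⟩
  refine ⟨FGMod.sum R P P'', inferInstanceAs (Module.Projective R (↥P.1 × ↥P''.1)), ψ, hψs,
    ⟨e.trans (LinearEquiv.ofBijective c hcb).symm⟩⟩

/-- Product of submodules is the submodule of the product. -/
def prodSubEquiv {A B : Type u} [AddCommGroup A] [AddCommGroup B] [Module R A] [Module R B]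
    (p : Submodule R A) (q : Submodule R B) : (↥p × ↥q) ≃ₗ[R] ↥(p.prod q) where
  toFun x := ⟨(x.1.1, x.2.1), x.1.2, x.2.2⟩
  map_add' x y := rfl
  map_smul' c x := rfl
  invFun z := (⟨z.1.1, z.2.1⟩, ⟨z.1.2, z.2.2⟩)
  left_inv x := rfl
  right_inv z := rfl

lemma isSyzygyOf_sum {K M K' M' : FGMod R} (h : IsSyzygyOf R K M) (h' : IsSyzygyOf R K' M') :
    IsSyzygyOf R (FGMod.sum R K K') (FGMod.sum R M M') := by
  obtain ⟨P, hP, φ, hφ, ⟨e⟩⟩ := h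
  obtain ⟨P', hP', φ', hφ', ⟨e'⟩⟩ := h'
  haveI := hP; haveI := hP'
  refine ⟨FGMod.sum R P P', inferInstanceAs (Module.Projective R (↥P.1 × ↥P'.1)),
    φ.prodMap φ', ?_, ⟨?_⟩⟩
  · have := Function.Surjective.prodMap hφ hφ'
    rwa [← LinearMap.coe_prodMap] at this
  · refine (e.prodCongr e').trans ((prodSubEquiv (LinearMap.ker φ) (LinearMap.ker φ')).trans
      (LinearEquiv.ofEq _ _ (LinearMap.ker_prodMap φ φ').symm))

noncomputable def syz [IsNoetherianRing R] (M : FGMod R) : FGMod R := (exists_syzygy M).choose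

lemma syz_spec [IsNoetherianRing R] (M : FGMod R) : IsSyzygyOf R (syz M) M :=
  (exists_syzygy M).choose_spec

end JProof

/-- Over a commutative Noetherian ring `R`, the assignment
`[M] ↦ [Ω_R M]` induces a well-defined `ℤ[t^{±1}]`-linear endomorphism of `J(R)`. -/
theorem statement0 [IsNoetherianRing R] :
    ∃ Ω : JMod R →ₗ[ℤ[T;T⁻¹]] JMod R,
      ∀ K M : FGMod R, IsSyzygyOf R K M → Ω (JMod.cls R M) = JMod.cls R K := by
  classical
  set v : FGMod R → JMod R := fun M => JMod.cls R (JProof.syz M) with hv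
  set L : (FGMod R →₀ ℤ[T;T⁻¹]) →ₗ[ℤ[T;T⁻¹]] JMod R :=
    Finsupp.linearCombination (ℤ[T;T⁻¹]) v with hL
  have hLs : ∀ M : FGMod R, L (single M 1) = JMod.cls R (JProof.syz M) := by
    intro M
    rw [hL, Finsupp.linearCombination_single, one_smul]
  have hker : Submodule.span (ℤ[T;T⁻¹]) (jRel1 R ∪ jRel2 R ∪ jRel3 R) ≤ LinearMap.ker L := by
    rw [Submodule.span_le]
    rintro x ((⟨P, M, M', f, g, hP, hf, hg, hfg, rfl⟩ |
               ⟨M', P, M, f, g, hP, hf, hg, hfg, rfl⟩) |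
               ⟨M, M', rfl⟩)
    · rw [SetLike.mem_coe, LinearMap.mem_ker, map_sub, hLs, hLs, sub_eq_zero]
      exact JProof.cls_syzygy_unique (JProof.syz_spec M)
        (JProof.isSyzygyOf_of_rel1 f g hP hf hg hfg (JProof.syz_spec M'))
    · rw [SetLike.mem_coe, LinearMap.mem_ker, map_sub, map_smul, hLs, hLs]
      have h1 : IsSyzygyOf R M' M := by
        refine ⟨P, hP, g, hg, ⟨(LinearEquiv.ofInjective f hf).trans
          (LinearEquiv.ofEq _ _ ((LinearMap.exact_iff.mp hfg).symm))⟩⟩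
      rw [JProof.cls_syzygy_unique (JProof.syz_spec M) h1,
        JProof.cls_eq_T_smul_of_syzygy (JProof.syz_spec M'), sub_self]
    · rw [SetLike.mem_coe, LinearMap.mem_ker, map_sub, map_sub, hLs, hLs, hLs]
      rw [JProof.cls_syzygy_unique (JProof.syz_spec (FGMod.sum R M M'))
        (JProof.isSyzygyOf_sum (JProof.syz_spec M) (JProof.syz_spec M')),
        JProof.cls_sum, add_sub_cancel_left, sub_self]
  refine ⟨Submodule.liftQ _ L hker, ?_⟩
  intro K M hKM
  have h1 : Submodule.liftQ _ L hker (JMod.cls R M) = L (single M 1) := rfl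
  rw [h1, hLs]
  exact JProof.cls_syzygy_unique (JProof.syz_spec M) hKM
end

section
/- Let R be a commutative Noetherian ring, F the free ℤ[t^{±1}]-module on the set 𝒞(R) of isomorphism classes of finitely generated R-modules, and L the ℤ[t^{±1}]-submodule of F generated by: (R1') [P] for every finitely generated projective R-module P; (R2') [M]−t[Ω_R M] for every finitely generated R-module M; (R3) [M⊕M']−[M]−[M'] for all finitely generated R-modules M and M'. Then there is an isomorphism of ℤ[t^{±1}]-modules J(R) ≅ F/L. -/
open LaurentPolynomial Finsupp

universe u

variable (R : Type u) [CommRing R]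

/-- Relations (R1'): `[P]` for every finitely generated projective module `P`. -/
def jRel1' : Set (FGMod R →₀ ℤ[T;T⁻¹]) :=
  {x | ∃ P : FGMod R, Module.Projective R ↥P.1 ∧ x = single P 1}

/-- Relations (R2'): `[M] - t • [Ω M]` for every finitely generated module `M`
(and every syzygy `Ω M` of `M`). -/
def jRel2' : Set (FGMod R →₀ ℤ[T;T⁻¹]) :=
  {x | ∃ M K : FGMod R, IsSyzygyOf R K M ∧
    x = single M 1 - (T 1 : ℤ[T;T⁻¹]) • single K (1 : ℤ[T;T⁻¹])}

/-- The submodule generated by the primed relations. -/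
noncomputable abbrev JRelSpan' (R : Type u) [CommRing R] :
    Submodule (ℤ[T;T⁻¹]) (FGMod R →₀ ℤ[T;T⁻¹]) :=
  Submodule.span (ℤ[T;T⁻¹]) (jRel1' R ∪ jRel2' R ∪ jRel3 R)

noncomputable abbrev JRelSpan (R : Type u) [CommRing R] :
    Submodule (ℤ[T;T⁻¹]) (FGMod R →₀ ℤ[T;T⁻¹]) :=
  Submodule.span (ℤ[T;T⁻¹]) (jRel1 R ∪ jRel2 R ∪ jRel3 R)

lemma mem1' {x} (h : x ∈ jRel1' R) : x ∈ JRelSpan' R :=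
  Submodule.subset_span (Or.inl (Or.inl h))

lemma mem2' {x} (h : x ∈ jRel2' R) : x ∈ JRelSpan' R :=
  Submodule.subset_span (Or.inl (Or.inr h))

lemma mem3' {x} (h : x ∈ jRel3 R) : x ∈ JRelSpan' R :=
  Submodule.subset_span (Or.inr h)

lemma mem1 {x} (h : x ∈ jRel1 R) : x ∈ JRelSpan R :=
  Submodule.subset_span (Or.inl (Or.inl h))

lemma mem2 {x} (h : x ∈ jRel2 R) : x ∈ JRelSpan R :=
  Submodule.subset_span (Or.inl (Or.inr h))

lemma mem3 {x} (h : x ∈ jRel3 R) : x ∈ JRelSpan R :=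
  Submodule.subset_span (Or.inr h)

/-- (R1) relations lie in the span of the primed relations. -/
lemma jRel1_subset [IsNoetherianRing R] : jRel1 R ⊆ ↑(JRelSpan' R) := by
  rintro x ⟨P, M, M', f, g, hP, hf, hg, hex, rfl⟩
  haveI := M.2
  -- a free presentation of M
  obtain ⟨n, π, hπ⟩ := Module.Finite.exists_fin' R ↥M.1
  set Q : FGMod R := ⟨ModuleCat.of R (Fin n → R), inferInstanceAs (Module.Finite R (Fin n → R))⟩
    with hQ
  haveI : IsNoetherian R (Fin n → R) := inferInstance
  set K : FGMod R := ⟨ModuleCat.of R ↥(LinearMap.ker π),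
    Module.Finite.iff_fg.mpr (IsNoetherian.noetherian _)⟩ with hK
  have hQproj : Module.Projective R ↥Q.1 := inferInstanceAs (Module.Projective R (Fin n → R))
  -- K is a syzygy of M
  have hKM : IsSyzygyOf R K M := ⟨Q, hQproj, π, hπ, ⟨LinearEquiv.refl R _⟩⟩
  -- K × P is a syzygy of M'
  have hgπ : Function.Surjective (g ∘ₗ π) := hg.comp hπ
  -- build the splitting of 0 → ker π → ker (g ∘ π) → P → 0
  have hrange : LinearMap.ker g = LinearMap.range f := LinearMap.exact_iff.mp hex
  set N := LinearMap.ker (g ∘ₗ π) with hN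
  have hmem : ∀ x : N, π x ∈ LinearMap.range f := by
    intro x
    rw [← hrange]
    exact x.2
  set π₀ : ↥N →ₗ[R] ↥(LinearMap.range f) :=
    LinearMap.codRestrict _ (π ∘ₗ N.subtype) hmem with hπ₀
  set e₁ : ↥P.1 ≃ₗ[R] ↥(LinearMap.range f) := LinearEquiv.ofInjective f hf with he₁
  set ρ : ↥N →ₗ[R] ↥P.1 := (e₁.symm : ↥(LinearMap.range f) →ₗ[R] ↥P.1) ∘ₗ π₀ with hρ
  have hρsurj : Function.Surjective ρ := by
    have hπ₀surj : Function.Surjective π₀ := by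
      rintro ⟨y, hy⟩
      obtain ⟨q, hq⟩ := hπ y
      refine ⟨⟨q, ?_⟩, ?_⟩
      · have hy' : g y = 0 := by
          have : y ∈ LinearMap.ker g := by rw [hrange]; exact hy
          exact this
        show q ∈ LinearMap.ker (g ∘ₗ π)
        simp only [LinearMap.mem_ker, LinearMap.comp_apply, hq]
        exact hy'
      · apply Subtype.ext
        exact hq
    exact e₁.symm.surjective.comp hπ₀surj
  have hle : LinearMap.ker π ≤ N := by
    intro x hx
    simp only [hN, LinearMap.mem_ker, LinearMap.comp_apply] at *
    rw [hx]; simp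
  set ι : ↥(LinearMap.ker π) →ₗ[R] ↥N := Submodule.inclusion hle with hι
  have hιinj : Function.Injective ι := Submodule.inclusion_injective hle
  have hexact : Function.Exact ι ρ := by
    intro x
    constructor
    · intro hx
      have : π₀ x = 0 := by
        have := congrArg e₁ hx
        simpa [hρ, map_zero] using this
      have hx0 : π (x : Fin n → R) = 0 := congrArg Subtype.val this
      exact ⟨⟨(x : Fin n → R), hx0⟩, rfl⟩
    · rintro ⟨y, rfl⟩
      have : π₀ (ι y) = 0 := by
        apply Subtype.ext
        exact y.2
      simp [hρ, this]
  -- section of ρ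
  obtain ⟨s, hs⟩ := Module.projective_lifting_property (h := hP) ρ LinearMap.id hρsurj
  obtain ⟨e, -, -⟩ := hexact.splitSurjectiveEquiv hιinj ⟨s, hs⟩
  have hKP : IsSyzygyOf R (FGMod.sum R K P) M' := by
    refine ⟨Q, hQproj, g ∘ₗ π, hgπ, ⟨e.symm⟩⟩
  -- assemble the relation
  have a : single M 1 - (T 1 : ℤ[T;T⁻¹]) • single K (1 : ℤ[T;T⁻¹]) ∈ JRelSpan' R :=
    mem2' R ⟨M, K, hKM, rfl⟩
  have b : single M' 1 - (T 1 : ℤ[T;T⁻¹]) • single (FGMod.sum R K P) (1 : ℤ[T;T⁻¹]) ∈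
      JRelSpan' R := mem2' R ⟨M', FGMod.sum R K P, hKP, rfl⟩
  have c : single (FGMod.sum R K P) (1 : ℤ[T;T⁻¹]) - single K 1 - single P 1 ∈ JRelSpan' R :=
    mem3' R ⟨K, P, rfl⟩
  have d : single P (1 : ℤ[T;T⁻¹]) ∈ JRelSpan' R := mem1' R ⟨P, hP, rfl⟩
  have key : single M (1 : ℤ[T;T⁻¹]) - single M' 1 =
      (single M 1 - (T 1 : ℤ[T;T⁻¹]) • single K (1 : ℤ[T;T⁻¹])) -
      (single M' 1 - (T 1 : ℤ[T;T⁻¹]) • single (FGMod.sum R K P) (1 : ℤ[T;T⁻¹])) -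
      (T 1 : ℤ[T;T⁻¹]) • (single (FGMod.sum R K P) (1 : ℤ[T;T⁻¹]) - single K 1 - single P 1) -
      (T 1 : ℤ[T;T⁻¹]) • single P (1 : ℤ[T;T⁻¹]) := by
    simp only [smul_sub]
    abel
  rw [key]
  exact sub_mem (sub_mem (sub_mem a b) (Submodule.smul_mem _ _ c)) (Submodule.smul_mem _ _ d)

/-- (R2) relations lie in (R2'). -/
lemma jRel2_subset : jRel2 R ⊆ jRel2' R := by
  rintro x ⟨M', P, M, f, g, hP, hf, hg, hex, rfl⟩
  have hrange : LinearMap.ker g = LinearMap.range f := LinearMap.exact_iff.mp hex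
  exact ⟨M, M', ⟨P, hP, g, hg,
    ⟨(LinearEquiv.ofInjective f hf).trans (LinearEquiv.ofEq _ _ hrange.symm)⟩⟩, rfl⟩

/-- (R1') relations lie in the span of the unprimed relations. -/
lemma jRel1'_subset : jRel1' R ⊆ ↑(JRelSpan R) := by
  rintro x ⟨P, hP, rfl⟩
  haveI := P.2
  have h1 : single (FGMod.sum R P P) (1 : ℤ[T;T⁻¹]) - single P 1 ∈ JRelSpan R := by
    refine mem1 R ⟨P, FGMod.sum R P P, P, LinearMap.inl R ↥P.1 ↥P.1,
      LinearMap.snd R ↥P.1 ↥P.1, hP, LinearMap.inl_injective, Prod.snd_surjective,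
      Function.Exact.inl_snd (R := R) (M := ↥P.1) (N := ↥P.1), rfl⟩
  have h3 : single (FGMod.sum R P P) (1 : ℤ[T;T⁻¹]) - single P 1 - single P 1 ∈ JRelSpan R :=
    mem3 R ⟨P, P, rfl⟩
  have key : single P (1 : ℤ[T;T⁻¹]) =
      (single (FGMod.sum R P P) (1 : ℤ[T;T⁻¹]) - single P 1) -
      (single (FGMod.sum R P P) (1 : ℤ[T;T⁻¹]) - single P 1 - single P 1) := by abel
  rw [key]
  exact sub_mem h1 h3

/-- (R2') relations lie in (R2)'s span. -/
lemma jRel2'_subset : jRel2' R ⊆ jRel2 R := by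
  rintro x ⟨M, K, ⟨P, hP, φ, hφ, ⟨e⟩⟩, rfl⟩
  refine ⟨K, P, M, (LinearMap.ker φ).subtype ∘ₗ (e : ↥K.1 →ₗ[R] ↥(LinearMap.ker φ)), φ,
    hP, (Submodule.injective_subtype _).comp e.injective, hφ, ?_, rfl⟩
  rw [LinearMap.exact_iff]
  rw [LinearMap.range_comp]
  rw [LinearEquiv.range]
  simp [Submodule.map_top, Submodule.range_subtype]

lemma span_eq [IsNoetherianRing R] : JRelSpan' R = JRelSpan R := by
  apply le_antisymm
  · rw [Submodule.span_le]
    rintro x (h | h)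
    · rcases h with h | h
      · exact jRel1'_subset R h
      · exact mem2 R (jRel2'_subset R h)
    · exact mem3 R h
  · rw [Submodule.span_le]
    rintro x (h | h)
    · rcases h with h | h
      · exact jRel1_subset R h
      · exact Submodule.subset_span (Or.inl (Or.inr (jRel2_subset R h)))
    · exact mem3' R h

/-- `J(R)` is isomorphic, as a `ℤ[t^{±1}]`-module, to the quotient of
the free module `F` by the submodule `L` generated by (R1'), (R2') and (R3). -/
theorem statement1 [IsNoetherianRing R] :
    Nonempty ((((FGMod R →₀ ℤ[T;T⁻¹]) ⧸
        Submodule.span (ℤ[T;T⁻¹]) (jRel1' R ∪ jRel2' R ∪ jRel3 R))) ≃ₗ[ℤ[T;T⁻¹]] JMod R) :=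
  ⟨Submodule.quotEquivOfEq _ _ (span_eq R)⟩
end

section
/- Let φ : R → S be a flat homomorphism of commutative Noetherian rings (i.e., S is flat as an R-module via φ). Then the assignment [M] ↦ [S ⊗_R M] induces a well-defined homomorphism of ℤ[t^{±1}]-modules J(φ) : J(R) → J(S). -/
open LaurentPolynomial Finsupp

universe u

variable (R : Type u) [CommRing R]

/-- A flat homomorphism `φ : R → S` of commutative Noetherian rings
(i.e. an `R`-algebra structure on `S` making `S` a flat `R`-module) induces a
`ℤ[t^{±1}]`-linear map `J(φ) : J(R) → J(S)` with `[M] ↦ [S ⊗_R M]`. -/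
theorem statement2 (R S : Type u) [CommRing R] [CommRing S] [IsNoetherianRing R]
    [IsNoetherianRing S] [Algebra R S] (hflat : Module.Flat R S) :
    ∃ Φ : JMod R →ₗ[ℤ[T;T⁻¹]] JMod S,
      ∀ M : FGMod R, Φ (JMod.cls R M) =
        JMod.cls S ⟨ModuleCat.of S (TensorProduct R S ↥M.1),
          by haveI := M.2; exact inferInstanceAs (Module.Finite S (TensorProduct R S ↥M.1))⟩ := by
  classical
  haveI := hflat
  -- the zero module over `S`
  let Z : FGMod S := ⟨ModuleCat.of S PUnit,
    Module.Finite.of_surjective (0 : S →ₗ[S] PUnit.{u+1}) (fun x => ⟨0, Subsingleton.elim _ _⟩)⟩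
  -- isomorphic modules have the same class
  have isoRel : ∀ (A B : FGMod S) (g : ↥A.1 →ₗ[S] ↥B.1), Function.Bijective g →
      single A (1 : ℤ[T;T⁻¹]) - single B 1 ∈
        Submodule.span (ℤ[T;T⁻¹]) (jRel1 S ∪ jRel2 S ∪ jRel3 S) := by
    intro A B g hg
    refine Submodule.subset_span (Or.inl (Or.inl ?_))
    refine ⟨Z, A, B, 0, g, inferInstanceAs (Module.Projective S PUnit.{u+1}),
      fun a b _ => Subsingleton.elim a b, hg.2, ?_, rfl⟩
    rw [LinearMap.exact_iff, LinearMap.ker_eq_bot.mpr hg.1, LinearMap.range_zero]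
  -- the map on modules
  let tm : FGMod R → FGMod S := fun M =>
    ⟨ModuleCat.of S (TensorProduct R S ↥M.1),
      by haveI := M.2; exact inferInstanceAs (Module.Finite S (TensorProduct R S ↥M.1))⟩
  let F : (FGMod R →₀ ℤ[T;T⁻¹]) →ₗ[ℤ[T;T⁻¹]] (FGMod S →₀ ℤ[T;T⁻¹]) :=
    Finsupp.lmapDomain (ℤ[T;T⁻¹]) (ℤ[T;T⁻¹]) tm
  have hFsingle : ∀ (M : FGMod R) (c : ℤ[T;T⁻¹]), F (single M c) = single (tm M) c := by
    intro M c
    simp [F, Finsupp.lmapDomain_apply, Finsupp.mapDomain_single]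
  have hspan : Submodule.span (ℤ[T;T⁻¹]) (jRel1 R ∪ jRel2 R ∪ jRel3 R) ≤
      (Submodule.span (ℤ[T;T⁻¹]) (jRel1 S ∪ jRel2 S ∪ jRel3 S)).comap F := by
    rw [Submodule.span_le]
    rintro x ((h | h) | h)
    · -- (R1)
      obtain ⟨P, M, M', f, g, hP, hf, hg, hex, rfl⟩ := h
      simp only [SetLike.mem_coe, Submodule.mem_comap, map_sub, hFsingle]
      refine Submodule.subset_span (Or.inl (Or.inl ?_))
      haveI := hP
      refine ⟨tm P, tm M, tm M', f.baseChange S, g.baseChange S,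
        inferInstanceAs (Module.Projective S (TensorProduct R S ↥P.1)), ?_, ?_, ?_, rfl⟩
      · show Function.Injective ⇑(f.baseChange S)
        rw [LinearMap.baseChange_eq_ltensor]
        exact Module.Flat.lTensor_preserves_injective_linearMap f hf
      · show Function.Surjective ⇑(g.baseChange S)
        rw [LinearMap.baseChange_eq_ltensor]
        exact LinearMap.lTensor_surjective _ hg
      · show Function.Exact ⇑(f.baseChange S) ⇑(g.baseChange S)
        rw [LinearMap.baseChange_eq_ltensor, LinearMap.baseChange_eq_ltensor]
        exact Module.Flat.lTensor_exact S hex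
    · -- (R2)
      obtain ⟨M', P, M, f, g, hP, hf, hg, hex, rfl⟩ := h
      simp only [SetLike.mem_coe, Submodule.mem_comap, map_sub, map_smul, hFsingle]
      refine Submodule.subset_span (Or.inl (Or.inr ?_))
      haveI := hP
      refine ⟨tm M', tm P, tm M, f.baseChange S, g.baseChange S,
        inferInstanceAs (Module.Projective S (TensorProduct R S ↥P.1)), ?_, ?_, ?_, rfl⟩
      · show Function.Injective ⇑(f.baseChange S)
        rw [LinearMap.baseChange_eq_ltensor]
        exact Module.Flat.lTensor_preserves_injective_linearMap f hf
      · show Function.Surjective ⇑(g.baseChange S)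
        rw [LinearMap.baseChange_eq_ltensor]
        exact LinearMap.lTensor_surjective _ hg
      · show Function.Exact ⇑(f.baseChange S) ⇑(g.baseChange S)
        rw [LinearMap.baseChange_eq_ltensor, LinearMap.baseChange_eq_ltensor]
        exact Module.Flat.lTensor_exact S hex
    · -- (R3)
      obtain ⟨M, M', rfl⟩ := h
      simp only [SetLike.mem_coe, Submodule.mem_comap, map_sub, hFsingle]
      -- `S ⊗ (M × M') ≅ (S ⊗ M) × (S ⊗ M')`
      have h1 : single (tm (FGMod.sum R M M')) (1 : ℤ[T;T⁻¹]) -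
          single (FGMod.sum S (tm M) (tm M')) 1 ∈
          Submodule.span (ℤ[T;T⁻¹]) (jRel1 S ∪ jRel2 S ∪ jRel3 S) := by
        refine isoRel _ _
          (LinearMap.prod ((LinearMap.fst R ↥M.1 ↥M'.1).baseChange S)
            ((LinearMap.snd R ↥M.1 ↥M'.1).baseChange S)) ?_
        have hco : ∀ x, LinearMap.prod ((LinearMap.fst R ↥M.1 ↥M'.1).baseChange S)
              ((LinearMap.snd R ↥M.1 ↥M'.1).baseChange S) x =
            TensorProduct.prodRight R S S ↥M.1 ↥M'.1 x := by
          intro x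
          induction x using TensorProduct.induction_on with
          | zero => simp
          | tmul s p => obtain ⟨a, b⟩ := p; simp
          | add x y hx hy =>
            simp only [map_add, hx, hy]
        have hb := (TensorProduct.prodRight R S S ↥M.1 ↥M'.1).bijective
        exact ⟨fun a b hab => hb.1 ((hco a).symm.trans (hab.trans (hco b))),
          fun y => (hb.2 y).imp (fun x hx => (hco x).trans hx)⟩
      have h2 : single (FGMod.sum S (tm M) (tm M')) (1 : ℤ[T;T⁻¹]) -
          single (tm M) 1 - single (tm M') 1 ∈
          Submodule.span (ℤ[T;T⁻¹]) (jRel1 S ∪ jRel2 S ∪ jRel3 S) :=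
        Submodule.subset_span (Or.inr ⟨tm M, tm M', rfl⟩)
      have := Submodule.add_mem _ h1 h2
      convert this using 1
      abel
  refine ⟨Submodule.mapQ _ _ F hspan, fun M => ?_⟩
  show Submodule.mapQ _ _ F hspan (Submodule.Quotient.mk (single M 1)) = _
  rw [Submodule.mapQ_apply, hFsingle]
  rfl
end

section
/- Let G = ⟨t⟩ be the infinite cyclic group and X a set with a G-action. An element u of the permutation ℤG-module ℤX is torsion if and only if there exists n ∈ ℕ, n ≥ 1, such that (t^n − 1)·u = 0. -/
universe u v

/-- The permutation module `ℤX` of a `G`-set `X` over the group ring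
`ℤG = MonoidAlgebra ℤ G`, for `G = ⟨t⟩` the infinite cyclic group
(realized as `Multiplicative ℤ`). -/
noncomputable abbrev permMod (X : Type u) [MulAction (Multiplicative ℤ) X] :=
  (Representation.ofMulAction ℤ (Multiplicative ℤ) X).asModule

/-- The generator `t` of the infinite cyclic group, as an element of `ℤG`. -/
noncomputable abbrev tGen : MonoidAlgebra ℤ (Multiplicative ℤ) :=
  MonoidAlgebra.of ℤ (Multiplicative ℤ) (Multiplicative.ofAdd 1)

section Aux

variable {X : Type u} [MulAction (Multiplicative ℤ) X]

/-- Restriction to a free orbit, valued in the group algebra. -/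
noncomputable def orbitRestrict {x₀ : X}
    (hinj : Function.Injective (fun g : Multiplicative ℤ => g • x₀)) :
    MonoidAlgebra ℤ X →+ MonoidAlgebra ℤ (Multiplicative ℤ) :=
  (MonoidAlgebra.coeffAddEquiv.symm.toAddMonoidHom.comp
    (Finsupp.comapDomain.addMonoidHom hinj)).comp MonoidAlgebra.coeffAddEquiv.toAddMonoidHom

lemma orbitRestrict_apply {x₀ : X}
    (hinj : Function.Injective (fun g : Multiplicative ℤ => g • x₀))
    (v : MonoidAlgebra ℤ X) (g : Multiplicative ℤ) :
    (orbitRestrict hinj v).coeff g = v.coeff (g • x₀) := rfl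

/-- Restricting a finitely supported function to a free orbit intertwines the
module structure with multiplication in the group algebra. -/
lemma comap_orbit_intertwine (x₀ : X)
    (hinj : Function.Injective (fun g : Multiplicative ℤ => g • x₀))
    (r : MonoidAlgebra ℤ (Multiplicative ℤ)) (v : MonoidAlgebra ℤ X) :
    orbitRestrict hinj
        ((Representation.ofMulAction ℤ (Multiplicative ℤ) X).asAlgebraHom r v)
      = r * orbitRestrict hinj v := by
  induction r using MonoidAlgebra.induction_linear with
  | zero => simp
  | add f g hf hg =>
      simp only [map_add, LinearMap.add_apply, hf, hg, add_mul]
  | single g c =>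
      refine MonoidAlgebra.ext (Finsupp.ext fun h => ?_)
      rw [Representation.asAlgebraHom_single, MonoidAlgebra.coeff_single_mul_apply,
        orbitRestrict_apply, orbitRestrict_apply, LinearMap.smul_apply]
      rw [show ((c • (Representation.ofMulAction ℤ (Multiplicative ℤ) X) g v).coeff
          (h • x₀) : ℤ)
        = c * ((Representation.ofMulAction ℤ (Multiplicative ℤ) X) g v).coeff (h • x₀) from rfl,
        Representation.coeff_ofMulAction, ← mul_smul]

lemma fix_pow_smul (g : Multiplicative ℤ) (x : X) (h : g • x = x) (k : ℕ) :
    g ^ k • x = x := by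
  induction k with
  | zero => simp
  | succ k ih => rw [pow_succ, mul_smul, h, ih]

/-- If a nonzero element of `ℤG` annihilates `v`, each point in the support of `v`
has finite orbit. -/
lemma support_periodic (v : MonoidAlgebra ℤ X) (r : MonoidAlgebra ℤ (Multiplicative ℤ))
    (hr : r ≠ 0)
    (h : (Representation.ofMulAction ℤ (Multiplicative ℤ) X).asAlgebraHom r v = 0)
    (x : X) (hx : x ∈ v.coeff.support) :
    ∃ m : ℕ, 1 ≤ m ∧ Multiplicative.ofAdd (m : ℤ) • x = x := by
  by_contra hcon
  push_neg at hcon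
  have hfix : ∀ g : Multiplicative ℤ, g • x = x → g = 1 := by
    intro g hg
    by_contra hg1
    have hginv : g⁻¹ • x = x := by
      conv_lhs => rw [← hg]
      rw [inv_smul_smul]
    set a : ℤ := Multiplicative.toAdd g with ha
    have ha0 : a ≠ 0 := by
      simpa [ha] using hg1
    rcases Int.natAbs_eq a with hpos | hneg
    · refine hcon a.natAbs (by omega) ?_
      rw [← hpos]; simpa [ha] using hg
    · refine hcon a.natAbs (by omega) ?_
      have : Multiplicative.ofAdd (a.natAbs : ℤ) = g⁻¹ := by
        have : (a.natAbs : ℤ) = -a := by omega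
        rw [this]; rfl
      rw [this]; exact hginv
  have hinj : Function.Injective (fun g : Multiplicative ℤ => g • x) := by
    intro a b hab
    simp only at hab
    have : (b⁻¹ * a) • x = x := by rw [mul_smul, hab, inv_smul_smul]
    exact (inv_mul_eq_one.mp (hfix _ this)).symm
  have hmain := comap_orbit_intertwine x hinj r v
  rw [h, map_zero] at hmain
  have hP : orbitRestrict hinj v ≠ 0 := by
    intro h0
    have h1 : (orbitRestrict hinj v).coeff 1 = 0 := by rw [h0]; rfl
    rw [orbitRestrict_apply, one_smul] at h1
    exact (Finsupp.mem_support_iff.mp hx) h1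
  rcases mul_eq_zero.mp hmain.symm with h' | h'
  · exact hr h'
  · exact hP h'

end Aux

/-- For `G = ⟨t⟩` infinite cyclic and a `G`-set `X`, an element `u`
of the permutation module `ℤX` is torsion iff `(tⁿ − 1) • u = 0` for some `n ≥ 1`. -/
theorem statement12 (X : Type u) [MulAction (Multiplicative ℤ) X] (u : permMod X) :
    (∃ r : MonoidAlgebra ℤ (Multiplicative ℤ), r ≠ 0 ∧ r • u = 0) ↔
      ∃ n : ℕ, 1 ≤ n ∧ (tGen ^ n - 1) • u = 0 := by
  set ρ := Representation.ofMulAction ℤ (Multiplicative ℤ) X with hρ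
  set v : MonoidAlgebra ℤ X := ρ.asModuleEquiv u with hv
  have htpow : ∀ n : ℕ, (tGen : MonoidAlgebra ℤ (Multiplicative ℤ)) ^ n
      = MonoidAlgebra.of ℤ (Multiplicative ℤ) (Multiplicative.ofAdd (n : ℤ)) := by
    intro n
    rw [← map_pow]
    congr 1
    rw [← ofAdd_nsmul]
    norm_num
  have hsub : ∀ (n : ℕ) (w : permMod X),
      ρ.asModuleEquiv ((tGen ^ n - 1) • w)
        = ρ (Multiplicative.ofAdd (n : ℤ)) (ρ.asModuleEquiv w) - ρ.asModuleEquiv w := by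
    intro n w
    rw [Representation.asModuleEquiv_map_smul, map_sub, map_one, htpow,
      Representation.asAlgebraHom_of]
    simp
  constructor
  · rintro ⟨r, hr, hru⟩
    have hv0 : ρ.asAlgebraHom r v = 0 := by
      rw [hv, ← Representation.asModuleEquiv_map_smul, hru, map_zero]
    have hper := fun x hx => support_periodic v r hr hv0 x hx
    classical
    set n : ℕ := ∏ x ∈ v.coeff.support.attach, (hper x.1 x.2).choose with hn
    have hn1 : 1 ≤ n := by
      rw [hn]
      exact Finset.one_le_prod' (fun x _ => (hper x.1 x.2).choose_spec.1)
    refine ⟨n, hn1, ?_⟩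
    have hfixall : ∀ x ∈ v.coeff.support, Multiplicative.ofAdd (n : ℤ) • x = x := by
      intro x hx
      obtain ⟨k, hk⟩ := Finset.dvd_prod_of_mem (fun y : v.coeff.support => (hper y.1 y.2).choose)
        (Finset.mem_attach _ (⟨x, hx⟩ : v.coeff.support))
      rw [← hn] at hk
      have hbase := (hper x hx).choose_spec.2
      have : Multiplicative.ofAdd (n : ℤ)
          = (Multiplicative.ofAdd (((hper x hx).choose : ℕ) : ℤ)) ^ k := by
        rw [← ofAdd_nsmul]
        congr 1
        rw [hk]; push_cast; ring
      rw [this]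
      exact fix_pow_smul _ _ hbase k
    apply ρ.asModuleEquiv.injective
    rw [hsub, map_zero, ← hv, sub_eq_zero]
    apply MonoidAlgebra.coeff_injective
    show Finsupp.mapDomain (fun x => Multiplicative.ofAdd (n : ℤ) • x) v.coeff = v.coeff
    rw [Finsupp.mapDomain_congr (g := id) hfixall, Finsupp.mapDomain_id]
  · rintro ⟨n, hn, h⟩
    refine ⟨tGen ^ n - 1, ?_, h⟩
    rw [htpow n]
    intro h0
    rw [sub_eq_zero] at h0
    have : Multiplicative.ofAdd (n : ℤ) = (1 : Multiplicative ℤ) := by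
      have h0' : MonoidAlgebra.single (Multiplicative.ofAdd (n : ℤ)) (1 : ℤ)
          = MonoidAlgebra.single (1 : Multiplicative ℤ) (1 : ℤ) := by
        simpa [MonoidAlgebra.of_apply, MonoidAlgebra.one_def] using h0
      rcases (MonoidAlgebra.single_inj).mp h0' with ⟨h1, _⟩ | ⟨h1, _⟩
      · exact h1
      · exact absurd h1 one_ne_zero
    have : (n : ℤ) = 0 := by
      simpa using congrArg Multiplicative.toAdd this
    omega
end
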